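/- Let G be the graph obtained from K7 by deleting two adjacent edges, and let G' be obtained from G by a Δ-Y exchange on a triangle having exactly one vertex incident to a deleted edge, where that vertex is incident to exactly one deleted edge. Then G' does not contain K_{4,4} minus an edge as a minor. -/

import Mathlib

open SimpleGraph

/-- `H` is a minor of `G`: branch-set formulation. -/
def IsMinor {W V : Type*} (H : SimpleGraph W) (G : SimpleGraph V) : Prop :=
  ∃ ρ : W → Set V,
    (∀ w, (ρ w).Nonempty) ∧
    (∀ w, (G.induce (ρ w)).Connected) ∧
    (Pairwise fun w w' => Disjoint (ρ w) (ρ w')) ∧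
    ∀ ⦃w w'⦄, H.Adj w w' → ∃ a ∈ ρ w, ∃ b ∈ ρ w', G.Adj a b

/-- Δ-Y exchange on the triangle `v₁ v₂ v₃`. -/
def deltaY {V : Type*} (G : SimpleGraph V) (v₁ v₂ v₃ : V) : SimpleGraph (V ⊕ Unit) where
  Adj x y :=
    match x, y with
    | .inl a, .inl b => G.Adj a b ∧ s(a, b) ∉ ({s(v₁, v₂), s(v₂, v₃), s(v₁, v₃)} : Set (Sym2 V))
    | .inl a, .inr _ => a = v₁ ∨ a = v₂ ∨ a = v₃
    | .inr _, .inl a => a = v₁ ∨ a = v₂ ∨ a = v₃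
    | .inr _, .inr _ => False
  symm := ⟨by
    rintro (a | a) (b | b) h
    · exact ⟨h.1.symm, by rw [show s(b, a) = s(a, b) from Sym2.eq_swap]; exact h.2⟩
    · exact h
    · exact h
    · exact h⟩
  loopless := ⟨by
    rintro (a | a) h
    · exact G.ne_of_adj h.1 rfl
    · exact h⟩

/-- `K_{4,4}` minus an edge (the edge between `inl 0` and `inr 0`). -/
def K44e : SimpleGraph (Fin 4 ⊕ Fin 4) where
  Adj x y :=
    match x, y with
    | .inl i, .inr j => ¬(i = 0 ∧ j = 0)
    | .inr j, .inl i => ¬(i = 0 ∧ j = 0)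
    | _, _ => False
  symm := ⟨by rintro (i | i) (j | j) h <;> exact h⟩
  loopless := ⟨by rintro (i | i) h <;> exact h⟩

/-!
The Δ-Y graph and `K_{4,4} - e` both have 8 vertices, so a minor is a spanning subgraph:
a bijective homomorphism `f`. The new vertex has degree 3 while `K_{4,4} - e` has minimum degree 3,
attained only at the ends of the missing edge; so the new vertex is `f u` for such an end `u`,
and `f` maps the three neighbours of `u` onto the triangle `{a, b, c}`.
Let `w ∈ {a, b, c}` be the vertex among `y, z` and `w'` the other one. The vertex `x` lies
outside the triangle and misses `w`, which forces `x = f u'` for the other end `u'` of the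
missing edge. Then `w'` is the image of one of the three remaining vertices, all adjacent to `u'`,
contradicting `¬ G.Adj x w'`.
-/

instance : DecidableRel K44e.Adj
  | .inl i, .inr j => inferInstanceAs (Decidable ¬(i = 0 ∧ j = 0))
  | .inr j, .inl i => inferInstanceAs (Decidable ¬(i = 0 ∧ j = 0))
  | .inl _, .inl _ => isFalse id
  | .inr _, .inr _ => isFalse id

theorem IsMinor.exists_bijective_hom {W V : Type*} [Finite V] {H : SimpleGraph W}
    {G : SimpleGraph V} (h : IsMinor H G) (hcard : Nat.card V ≤ Nat.card W) :
    ∃ f : H →g G, Function.Bijective f := by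
  obtain ⟨ρ, hne, -, hdisj, hadj⟩ := h
  choose f hf using hne
  have hinj : Function.Injective f := fun u u' he => by
    by_contra hne
    exact Set.disjoint_left.mp (hdisj hne) (hf u) (he ▸ hf u')
  have : Finite W := Finite.of_injective f hinj
  have hbij := hinj.bijective_of_nat_card_le hcard
  have hsingle : ∀ u, ∀ v ∈ ρ u, v = f u := by
    intro u v hv
    obtain ⟨u', rfl⟩ := hbij.2 v
    by_contra hne
    exact Set.disjoint_left.mp (hdisj fun h => hne (congrArg f h)) (hf u') hv
  refine ⟨⟨f, fun {u u'} huu' => ?_⟩, hbij⟩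
  obtain ⟨p, hp, q, hq, hpq⟩ := hadj huu'
  rwa [hsingle u p hp, hsingle u' q hq] at hpq

theorem K44e_degree (v : Fin 4 ⊕ Fin 4) :
    K44e.degree v = if v = .inl 0 ∨ v = .inr 0 then 3 else 4 := by
  revert v; decide

/- For `u = inl 0` the vertices outside the closed neighbourhood of `u` are `inr 0` and
`inl 1, inl 2, inl 3`, and each of the latter is adjacent to `inr 0` and to every neighbour of `u`. -/
theorem K44e_eq_swap_of_not_adj {u n v : Fin 4 ⊕ Fin 4} (hu : u = .inl 0 ∨ u = .inr 0)
    (hun : K44e.Adj u n) (hvu : v ≠ u) (huv : ¬ K44e.Adj u v) (hvn : ¬ K44e.Adj v n) :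
    v = u.swap := by
  revert u n v; decide

theorem K44e_adj_swap {u v : Fin 4 ⊕ Fin 4} (hu : u = .inl 0 ∨ u = .inr 0)
    (hvu : v ≠ u) (huv : ¬ K44e.Adj u v) (hv : v ≠ u.swap) : K44e.Adj v u.swap := by
  revert u v; decide

theorem K44e_ncard_neighborSet (v : Fin 4 ⊕ Fin 4) :
    (K44e.neighborSet v).ncard = if v = .inl 0 ∨ v = .inr 0 then 3 else 4 := by
  rw [← coe_neighborFinset, Set.ncard_coe_finset, card_neighborFinset_eq_degree, K44e_degree]

theorem K44e_hom_not_bijective {V : Type*} {G : SimpleGraph V} (f : K44e →g G)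
    {t x w w' : V} (ht : (G.neighborSet t).ncard ≤ 3) (htw : G.Adj t w)
    (hxt : x ≠ t) (htx : ¬ G.Adj t x) (hw't : w' ≠ t) (htw' : ¬ G.Adj t w') (hxw' : x ≠ w')
    (hGxw : ¬ G.Adj x w) (hGxw' : ¬ G.Adj x w') : ¬ Function.Bijective f := by
  intro hf
  have : Finite V := Finite.of_surjective f hf.2
  obtain ⟨u, rfl⟩ := hf.2 t
  obtain ⟨v, rfl⟩ := hf.2 x
  obtain ⟨v', rfl⟩ := hf.2 w'
  have himage : f '' K44e.neighborSet u ⊆ G.neighborSet (f u) := by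
    rintro _ ⟨n, hn, rfl⟩
    exact f.map_adj hn
  have hcard : (f '' K44e.neighborSet u).ncard = (K44e.neighborSet u).ncard :=
    Set.ncard_image_of_injective _ hf.1
  have hu : u = .inl 0 ∨ u = .inr 0 := by
    by_contra hu
    have := Set.ncard_le_ncard himage
    rw [hcard, K44e_ncard_neighborSet, if_neg hu] at this
    omega
  have himage_eq : f '' K44e.neighborSet u = G.neighborSet (f u) :=
    Set.eq_of_subset_of_ncard_le himage (by rwa [hcard, K44e_ncard_neighborSet, if_pos hu])
  obtain ⟨n, hn, rfl⟩ : w ∈ f '' K44e.neighborSet u := himage_eq ▸ htw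
  obtain rfl : v = u.swap := K44e_eq_swap_of_not_adj hu hn (ne_of_apply_ne f hxt)
    (fun h => htx (f.map_adj h)) (fun h => hGxw (f.map_adj h))
  exact hGxw' (f.map_adj (K44e_adj_swap hu (ne_of_apply_ne f hw't)
    (fun h => htw' (f.map_adj h)) (ne_of_apply_ne f hxw'.symm))).symm

theorem deltaY_ncard_neighborSet_inr_le {V : Type*} (G : SimpleGraph V) (v₁ v₂ v₃ : V) :
    ((deltaY G v₁ v₂ v₃).neighborSet (.inr ())).ncard ≤ 3 := by
  classical
  have : (deltaY G v₁ v₂ v₃).neighborSet (.inr ()) =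
      ↑({.inl v₁, .inl v₂, .inl v₃} : Finset (V ⊕ Unit)) := by
    ext (v | v) <;> simp [deltaY]
  rw [this, Set.ncard_coe_finset]
  exact Finset.card_le_three

theorem deltaY_adj_inr_inl_iff {V : Type*} {G : SimpleGraph V} {v₁ v₂ v₃ v : V} {u : Unit} :
    (deltaY G v₁ v₂ v₃).Adj (.inr u) (.inl v) ↔ v ∈ ({v₁, v₂, v₃} : Set V) :=
  Iff.rfl

theorem SimpleGraph.Adj.of_deltaY_inl {V : Type*} {G : SimpleGraph V} {v₁ v₂ v₃ v v' : V}
    (h : (deltaY G v₁ v₂ v₃).Adj (.inl v) (.inl v')) : G.Adj v v' :=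
  h.1

theorem K7_minus_two_adjacent_deltaY_no_K44e_minor_general
    (x y z : Fin 7) (hxy : x ≠ y) (hxz : x ≠ z) (hyz : y ≠ z)
    (G : SimpleGraph (Fin 7))
    (hG : G = (⊤ : SimpleGraph (Fin 7)).deleteEdges {s(x, y), s(x, z)})
    (a b c : Fin 7)
    (hone : ∃! w, w ∈ ({a, b, c} : Set (Fin 7)) ∧ w ∈ ({x, y, z} : Set (Fin 7)))
    (hnotx : ∀ w, w ∈ ({a, b, c} : Set (Fin 7)) → w ∈ ({x, y, z} : Set (Fin 7)) →
      (w = y ∨ w = z)) :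
    ¬ IsMinor K44e (deltaY G a b c) := by
  have hGxy : ¬ G.Adj x y := by simp [hG]
  have hGxz : ¬ G.Adj x z := by simp [hG]
  have hx : x ∉ ({a, b, c} : Set (Fin 7)) := fun hx => (hnotx x hx (by simp)).elim hxy hxz
  obtain ⟨w, ⟨hw, hwxyz⟩, huniq⟩ := hone
  obtain ⟨w', hw', hxw', hGxw, hGxw'⟩ : ∃ w' ∉ ({a, b, c} : Set (Fin 7)),
      x ≠ w' ∧ ¬ G.Adj x w ∧ ¬ G.Adj x w' := by
    rcases hnotx w hw hwxyz with rfl | rfl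
    · exact ⟨z, fun hz => hyz (huniq z ⟨hz, by simp⟩).symm, hxz, hGxy, hGxz⟩
    · exact ⟨y, fun hy => hyz (huniq y ⟨hy, by simp⟩), hxy, hGxz, hGxy⟩
  intro hminor
  obtain ⟨f, hf⟩ := hminor.exists_bijective_hom (by simp)
  exact K44e_hom_not_bijective f (deltaY_ncard_neighborSet_inr_le G a b c)
    (deltaY_adj_inr_inl_iff.mpr hw) Sum.inl_ne_inr (mt deltaY_adj_inr_inl_iff.mp hx)
    Sum.inl_ne_inr (mt deltaY_adj_inr_inl_iff.mp hw') (Sum.inl_injective.ne hxw')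
    (mt Adj.of_deltaY_inl hGxw) (mt Adj.of_deltaY_inl hGxw') hf

/-- Let `G` be `K₇` minus two adjacent edges `s(x,y)`, `s(x,z)`, and
perform a Δ-Y exchange on a triangle `a b c` of `G` having exactly one vertex incident
to a deleted edge, that vertex being incident to exactly one deleted edge (i.e. it is
`y` or `z`).  The result has no `K_{4,4} - e` minor. -/
theorem K7_minus_two_adjacent_deltaY_no_K44e_minor
    (x y z : Fin 7) (hxy : x ≠ y) (hxz : x ≠ z) (hyz : y ≠ z)
    (G : SimpleGraph (Fin 7))
    (hG : G = (⊤ : SimpleGraph (Fin 7)).deleteEdges {s(x, y), s(x, z)})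
    (a b c : Fin 7)
    (hab : G.Adj a b) (hbc : G.Adj b c) (hac : G.Adj a c)
    (hone : ∃! w, w ∈ ({a, b, c} : Set (Fin 7)) ∧ w ∈ ({x, y, z} : Set (Fin 7)))
    (hnotx : ∀ w, w ∈ ({a, b, c} : Set (Fin 7)) → w ∈ ({x, y, z} : Set (Fin 7)) →
      (w = y ∨ w = z)) :
    ¬ IsMinor K44e (deltaY G a b c) :=
  K7_minus_two_adjacent_deltaY_no_K44e_minor_general x y z hxy hxz hyz G hG a b c hone hnotx
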